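/- Suppose P_ind(D) eliminates imaginaries. Then for every α ∈ dcl(P∪D) there is a finite tuple q of elements of P such that dcl_{L(P)}(q∪D) = dcl_{L(P)}({α}∪D). -/

import Mathlib

open FirstOrder Language Set

universe u v w

namespace EIPaper

section Preamble

variable (L : FirstOrder.Language.{u, v}) (M : Type w) [L.Structure M]

/-- The definable closure of a parameter set `A` in the `L`-structure `M`:
`b ∈ dcl(A)` iff the singleton `{b}` is definable with parameters from `A`. -/
def dcl (A : Set M) : Set M :=
  {b : M | A.Definable L ({fun _ : Fin 1 => b} : Set (Fin 1 → M))}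

/-- `D` is `dcl`-independent over `P`. -/
def DclIndepOver (P D : Set M) : Prop :=
  ∀ d ∈ D, d ∉ dcl L M (P ∪ (D \ {d}))

/-- `P` is a `dcl`-independent set. -/
def DclIndep (P : Set M) : Prop :=
  ∀ p ∈ P, p ∉ dcl L M (P \ {p})

/-- A language with a single unary relation symbol (and nothing else). -/
def unaryLang : FirstOrder.Language :=
  ⟨fun _ => Empty, fun n => match n with | 1 => Unit | _ => Empty⟩

/-- The structure on `M` in `unaryLang` interpreting the unary relation as `P`. -/
def unaryStructure (P : Set M) : unaryLang.Structure M where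
  funMap := fun {_} f _ => f.elim
  RelMap := fun {n} r v =>
    match n, r with
    | 1, _ => v 0 ∈ P

/-- The language `L(P)` of the pair: `L` together with a new unary predicate. -/
def Lpair : FirstOrder.Language := L.sum unaryLang

/-- The structure of the pair `⟨M, P⟩` on `M`. -/
def pairStructure (P : Set M) : (Lpair L).Structure M :=
  letI := unaryStructure M P
  Language.sumStructure L unaryLang M

/-- `S` is definable with parameters from `A` in the pair `⟨M, P⟩`. -/
def PairDef (P A : Set M) {α : Type*} (S : Set (α → M)) : Prop :=
  letI := pairStructure L M P
  A.Definable (Lpair L) S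

/-- Definable closure in the pair `⟨M, P⟩`. -/
def dclPair (P A : Set M) : Set M :=
  {b : M | PairDef L M P A ({fun _ : Fin 1 => b} : Set (Fin 1 → M))}

/-- The language of the `D`-induced structure on `P`: for each `L`-formula with parameters
from `D` in `n` free variables, an `n`-ary relation symbol. -/
def indLang (D : Set M) : FirstOrder.Language :=
  ⟨fun _ => Empty, fun n => (L[[D]]).Formula (Fin n)⟩

/-- The `D`-induced structure on `P` by `M`. -/
def indStructure (P D : Set M) : (indLang L M D).Structure ↥P where
  funMap := fun {_} f _ => f.elim
  RelMap := fun {n} φ v => Formula.Realize (M := M) φ (fun i => (v i : M))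

/-- `S` is definable with parameters from `A ⊆ P` in the induced structure `P_ind(D)`. -/
def IndDef (P D : Set M) (A : Set ↥P) {α : Type*} (S : Set (α → ↥P)) : Prop :=
  letI := indStructure L M P D
  A.Definable (indLang L M D) S

/-- Definable closure in the induced structure `P_ind(D)`. -/
def clInd (P D : Set M) (A : Set ↥P) : Set ↥P :=
  {b : ↥P | IndDef L M P D A ({fun _ : Fin 1 => b} : Set (Fin 1 → ↥P))}

/-- A structure `N` eliminates imaginaries if for every `∅`-definable equivalence relation `E`
on `N^n` there are `l` and a `∅`-definable map `f : N^n → N^l` such that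
`E x y ↔ f x = f y`. -/
def ElimImaginaries (L' : FirstOrder.Language) (N : Type*) [L'.Structure N] : Prop :=
  ∀ (n : ℕ) (E : (Fin n → N) → (Fin n → N) → Prop), Equivalence E →
    (∅ : Set N).Definable L'
      {p : (Fin n ⊕ Fin n) → N | E (fun i => p (Sum.inl i)) (fun i => p (Sum.inr i))} →
    ∃ (l : ℕ) (f : (Fin n → N) → (Fin l → N)),
      (∅ : Set N).Definable L'
        {p : (Fin n ⊕ Fin l) → N | (fun i => p (Sum.inr i)) = f (fun i => p (Sum.inl i))} ∧
      ∀ x y : Fin n → N, E x y ↔ f x = f y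

/-- The induced structure `P_ind(D)` eliminates imaginaries. -/
def IndElimImaginaries (P D : Set M) : Prop :=
  letI := indStructure L M P D
  ElimImaginaries (indLang L M D) ↥P

/-- Topological closure with respect to (the product of) the order topology. -/
def ordClosure [LinearOrder M] {α : Type*} (S : Set (α → M)) : Set (α → M) :=
  letI : TopologicalSpace M := Preorder.topology M
  closure S

/-- Topological interior with respect to (the product of) the order topology. -/
def ordInterior [LinearOrder M] {α : Type*} (S : Set (α → M)) : Set (α → M) :=
  letI : TopologicalSpace M := Preorder.topology M
  interior S

/-- `P` is dense in `M` with respect to the order topology. -/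
def DenseIn [LinearOrder M] (P : Set M) : Prop :=
  letI : TopologicalSpace M := Preorder.topology M
  Dense P

/-- The cartesian power `P^α` inside `M^α`. -/
def cube (P : Set M) (α : Type*) : Set (α → M) := {x | ∀ i, x i ∈ P}

/-- Property (OP): for every parameter set `A` with `A \ P` dcl-independent over `P`, the
topological closure of any `A`-definable (in the pair) set is `L_A`-definable. -/
def OP [LinearOrder M] (P : Set M) : Prop :=
  ∀ A : Set M, DclIndepOver L M P (A \ P) →
    ∀ (n : ℕ) (V : Set (Fin n → M)), PairDef L M P A V →
      A.Definable L (ordClosure M V)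

/-- Property (dcl)_D. -/
def DclD (P D : Set M) : Prop :=
  ∀ B C : Set M, B ⊆ P → C ⊆ P →
    dcl L M ((dcl L M (B ∪ D) ∩ dcl L M (C ∪ D) ∩ P) ∪ D)
      = dcl L M (B ∪ D) ∩ dcl L M (C ∪ D)

/-- Property (ind)_D: every `A`-definable set in `P_ind(D)` is the trace on the corresponding
power of `P` of an `L_{A ∪ D}`-definable set. -/
def IndD (P D : Set M) : Prop :=
  ∀ (A : Set ↥P) (n : ℕ) (X : Set (Fin n → ↥P)), IndDef L M P D A X →
    ∃ Y : Set (Fin n → M), (Subtype.val '' A ∪ D).Definable L Y ∧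
      X = {x : Fin n → ↥P | (fun i => (x i : M)) ∈ Y}

/-- Property (dcl')_D. -/
def DclD' (P D : Set M) : Prop :=
  ∀ α ∈ dcl L M (P ∪ D), ∃ (k : ℕ) (q : Fin k → M),
    (∀ i, q i ∈ P) ∧ dcl L M (Set.range q ∪ D) = dclPair L M P ({α} ∪ D)

/-- `X ⊆ M^n` is `P`-bound over `A`: there is an `L_A`-definable function `h : M^m → M^n`
with `X ⊆ h(P^m)`. -/
def PBound (P A : Set M) {n : ℕ} (X : Set (Fin n → M)) : Prop :=
  ∃ (m : ℕ) (h : (Fin m → M) → (Fin n → M)),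
    A.Definable L
      {p : (Fin m ⊕ Fin n) → M | (fun i => p (Sum.inr i)) = h (fun i => p (Sum.inl i))} ∧
    X ⊆ h '' cube M P (Fin m)

/-- A subset of a linear order is a point, an open interval, or the whole line. -/
def IsIntervalOrPoint [LinearOrder M] (s : Set M) : Prop :=
  (∃ a, s = {a}) ∨ (∃ a b, s = Set.Ioo a b) ∨ (∃ a, s = Set.Iio a) ∨
    (∃ a, s = Set.Ioi a) ∨ s = Set.univ

end Preamble

/-- `M` is an o-minimal expansion of an ordered group with a distinguished positive
element `1`: the order, the addition and `1` are `∅`-definable, `0 < 1`, and every set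
definable (in `M`, with arbitrary parameters) is a finite union of points and intervals. -/
structure OMinOrderedGroup (L : FirstOrder.Language.{u, v}) (M : Type w) [L.Structure M]
    [AddCommGroup M] [LinearOrder M] [IsOrderedAddMonoid M] [One M] : Prop where
  one_pos : (0 : M) < 1
  lt_def : (∅ : Set M).Definable L {x : Fin 2 → M | x 0 < x 1}
  add_def : (∅ : Set M).Definable L {x : Fin 3 → M | x 0 + x 1 = x 2}
  one_def : (∅ : Set M).Definable L ({fun _ : Fin 1 => (1 : M)} : Set (Fin 1 → M))
  omin : ∀ s : Set M, (Set.univ : Set M).Definable L {x : Fin 1 → M | x 0 ∈ s} →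
    ∃ (k : ℕ) (t : Fin k → Set M), (∀ i, IsIntervalOrPoint M (t i)) ∧ s = ⋃ i, t i

end EIPaper

namespace EIPaper

section Preamble2

variable (L : FirstOrder.Language.{u, v}) (M : Type w) [L.Structure M]

/-- `P` is (the universe of) an elementary substructure of `M`, via the Tarski–Vaught test:
any `L`-formula with parameters from `P` that has a witness in `M` has a witness in `P`. -/
def IsElemSubset (P : Set M) : Prop :=
  ∀ (n : ℕ) (φ : L.Formula (Fin (n + 1))) (x : Fin n → M), (∀ i, x i ∈ P) →
    (∃ y : M, φ.Realize (Fin.snoc x y)) → ∃ y ∈ P, φ.Realize (Fin.snoc x y)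

/-- `P^n` is dense in `X ⊆ M^n` with respect to the (product of the) order topology. -/
def DenseInSet [LinearOrder M] {n : ℕ} (P : Set M) (X : Set (Fin n → M)) : Prop :=
  ordClosure M (cube M P (Fin n) ∩ X) = ordClosure M X

/-- The o-minimal dimension of `X ⊆ M^n`: the largest `k` such that the projection of `X`
to some `k` coordinates has nonempty interior. -/
noncomputable def odim [LinearOrder M] {n : ℕ} (X : Set (Fin n → M)) : ℕ :=
  sSup {k : ℕ | ∃ ρ : Fin k → Fin n, Function.Injective ρ ∧
    (ordInterior M ((fun x : Fin n → M => fun i : Fin k => x (ρ i)) '' X)).Nonempty}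

/-- The `L_P`-extension property: every `L`-definable, `A`-definable (in the pair) set `X`
in which `P^n` is dense extends to an `L_P`-definable, `A`-definable set of the same
dimension. -/
def LPExtension [LinearOrder M] (P : Set M) : Prop :=
  ∀ (A : Set M) (n : ℕ) (X : Set (Fin n → M)),
    (Set.univ : Set M).Definable L X → PairDef L M P A X → DenseInSet M P X →
    ∃ Y : Set (Fin n → M), P.Definable L Y ∧ PairDef L M P A Y ∧ X ⊆ Y ∧
      odim M Y = odim M X

end Preamble2

/-- An ordered field is real closed if every nonnegative element has a square root and every
polynomial of odd degree has a root. -/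
def IsRealClosedField (K : Type*) [Field K] [LinearOrder K] [IsStrictOrderedRing K] : Prop :=
  (∀ x : K, 0 ≤ x → ∃ y, y ^ 2 = x) ∧
    ∀ p : Polynomial K, Odd p.natDegree → ∃ x, Polynomial.eval x p = 0

/-- The language of ordered rings: constants `0, 1`, unary `-`, binary `+, ·`, and `<`. -/
def oRing : FirstOrder.Language :=
  ⟨fun n => match n with | 0 => Fin 2 | 1 => Unit | 2 => Fin 2 | _ => Empty,
   fun n => match n with | 2 => Unit | _ => Empty⟩

/-- The natural `oRing`-structure on an ordered field. -/
noncomputable instance oRingStructure (K : Type*) [Field K] [LinearOrder K] [IsStrictOrderedRing K] :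
    oRing.Structure K where
  funMap := fun {n} f v =>
    match n, f with
    | 0, c => (![(0 : K), 1]) c
    | 1, _ => -v 0
    | 2, f => (![v 0 + v 1, v 0 * v 1]) f
  RelMap := fun {n} r v =>
    match n, r with
    | 2, _ => v 0 < v 1

/-- A subset `G` of a field has the Mann property if for all `a_1, …, a_r` the equation
`a_1 x_1 + ⋯ + a_r x_r = 1` has only finitely many nondegenerate solutions in `G^r`. -/
def MannProperty (K : Type*) [Field K] (G : Set K) : Prop :=
  ∀ (r : ℕ) (a : Fin r → K),
    {q : Fin r → K | (∀ i, q i ∈ G) ∧ (∑ i, a i * q i = 1) ∧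
      ∀ I : Finset (Fin r), I.Nonempty → ∑ i ∈ I, a i * q i ≠ 0}.Finite

/-- `N` is `κ`-saturated: every finitely realizable set of formulas in one free variable over
a parameter set of size `< κ` is realized in `N`. -/
def IsSaturatedIn (L' : FirstOrder.Language) (N : Type*) [L'.Structure N] (κ : Cardinal) :
    Prop :=
  ∀ A : Set N, Cardinal.mk A < κ →
    ∀ T : Set ((L'[[A]]).Formula (Fin 1)),
      (∀ s : Finset ((L'[[A]]).Formula (Fin 1)), ↑s ⊆ T →
        ∃ x : Fin 1 → N, ∀ φ ∈ s, φ.Realize x) →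
      ∃ x : Fin 1 → N, ∀ φ ∈ T, φ.Realize x

/-- The definable closure in `N` satisfies the exchange property, i.e. `N` is pregeometric. -/
def HasExchange (L' : FirstOrder.Language) (N : Type*) [L'.Structure N] : Prop :=
  ∀ (A : Set N) (a b : N), a ∈ dcl L' N (A ∪ {b}) → a ∉ dcl L' N A → b ∈ dcl L' N (A ∪ {a})


section Helpers

variable {L' : FirstOrder.Language} {N : Type*} [L'.Structure N]

lemma fun1_eq_iff {z b : N} :
    (fun _ : Fin 1 => z) = (fun _ : Fin 1 => b) ↔ z = b :=
  ⟨fun h => congrFun h 0, fun h => by rw [h]⟩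

lemma definable_eq_const {A : Set N} {c : N} (hc : c ∈ A) {γ : Type*} (b : γ) :
    A.Definable L' {w : γ → N | w b = c} := by
  refine ⟨Term.equal (Term.var b) ((L'.con ⟨c, hc⟩).term), ?_⟩
  ext w
  simp [Formula.realize_equal, Term.realize_con]

lemma definable_eq_var {A : Set N} {γ : Type*} (b b' : γ) :
    A.Definable L' {w : γ → N | w b = w b'} := by
  refine ⟨Term.equal (Term.var b) (Term.var b'), ?_⟩
  ext w
  simp [Formula.realize_equal]

lemma definable_subst {A : Set N} {c : N}
    (hc : A.Definable L' ({fun _ : Fin 1 => c} : Set (Fin 1 → N)))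
    {γ : Type*} [Finite γ] {X : Set (γ → N)}
    (hX : ({c} ∪ A).Definable L' X) : A.Definable L' X := by
  classical
  rw [definable_iff_exists_formula_sum] at hX
  obtain ⟨χ, hχ⟩ := hX
  let ρ : ↥({c} ∪ A) ⊕ γ → ↥A ⊕ (Fin 1 ⊕ γ) := fun x =>
    match x with
    | Sum.inl a => if h : (a : N) ∈ A then Sum.inl ⟨(a : N), h⟩ else Sum.inr (Sum.inl 0)
    | Sum.inr g => Sum.inr (Sum.inr g)
  let Y : Set ((Fin 1 ⊕ γ) → N) := {u | (χ.relabel ρ).Realize (Sum.elim (↑) u)}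
  have hY : A.Definable L' Y := definable_iff_exists_formula_sum.mpr ⟨χ.relabel ρ, rfl⟩
  have hkey : ∀ u : (Fin 1 ⊕ γ) → N, u (Sum.inl 0) = c → (u ∈ Y ↔ (u ∘ Sum.inr) ∈ X) := by
    intro u hu
    have hcomp : ((Sum.elim ((↑) : ↥A → N) u) ∘ ρ)
        = Sum.elim ((↑) : ↥({c} ∪ A) → N) (u ∘ Sum.inr) := by
      funext x
      rcases x with a | g
      · show Sum.elim (Subtype.val) u (ρ (Sum.inl a)) = (a : N)
        by_cases h : (a : N) ∈ A
        · rw [show ρ (Sum.inl a) = Sum.inl ⟨(a : N), h⟩ from dif_pos h]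
          rfl
        · rw [show ρ (Sum.inl a) = Sum.inr (Sum.inl 0) from dif_neg h]
          have hac : (a : N) = c := by
            rcases a.2 with h' | h'
            · exact h'
            · exact absurd h' h
          rw [hac]
          exact hu
      · simp [ρ]
    have : u ∈ Y ↔ χ.Realize (Sum.elim ((↑) : ↥({c} ∪ A) → N) (u ∘ Sum.inr)) := by
      simp only [Y, Set.mem_setOf_eq, Formula.realize_relabel, hcomp]
    rw [this, hχ]
    exact Iff.rfl
  have hCset : A.Definable L'
      ((fun g : (Fin 1 ⊕ γ) → N => g ∘ (fun _ : Fin 1 => Sum.inl 0)) ⁻¹'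
        ({fun _ : Fin 1 => c} : Set (Fin 1 → N))) := hc.preimage_comp _
  have hXeq : X = (fun u : (Fin 1 ⊕ γ) → N => u ∘ Sum.inr) ''
      (Y ∩ ((fun g : (Fin 1 ⊕ γ) → N => g ∘ (fun _ : Fin 1 => Sum.inl 0)) ⁻¹'
        ({fun _ : Fin 1 => c} : Set (Fin 1 → N)))) := by
    ext v
    constructor
    · intro hv
      refine ⟨Sum.elim (fun _ => c) v, ⟨?_, ?_⟩, rfl⟩
      · exact (hkey _ rfl).mpr hv
      · exact Set.mem_preimage.mpr rfl
    · rintro ⟨u, ⟨huY, huC⟩, rfl⟩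
      have hu : u (Sum.inl 0) = c :=
        congrFun (Set.mem_singleton_iff.mp (Set.mem_preimage.mp huC)) 0
      exact (hkey u hu).mp huY
  rw [hXeq]
  exact (hY.inter hCset).image_comp _

lemma definable_subst_tuple {A : Set N} : ∀ {k : ℕ} (q : Fin k → N),
    (∀ i, A.Definable L' ({fun _ : Fin 1 => q i} : Set (Fin 1 → N))) →
    ∀ {γ : Type*} [Finite γ] {X : Set (γ → N)},
    (Set.range q ∪ A).Definable L' X → A.Definable L' X := by
  intro k
  induction k with
  | zero =>
    intro q _ γ _ X hX
    have : Set.range q ∪ A = A := by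
      rw [Set.range_eq_empty q, Set.empty_union]
    rwa [this] at hX
  | succ m ih =>
    intro q hq γ _ X hX
    have h1 : (Set.range (q ∘ Fin.succ) ∪ A).Definable L' X := by
      apply definable_subst (c := q 0)
      · exact (hq 0).mono Set.subset_union_right
      · apply hX.mono
        intro x hx
        rcases hx with hx | hx
        · obtain ⟨i, rfl⟩ := hx
          rcases Fin.eq_zero_or_eq_succ i with rfl | ⟨j, rfl⟩
          · exact Or.inl rfl
          · exact Or.inr (Or.inl ⟨j, rfl⟩)
        · exact Or.inr (Or.inr hx)
    exact ih (q ∘ Fin.succ) (fun i => hq i.succ) h1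

end Helpers

section Trans

variable (L : FirstOrder.Language.{u, v}) (M : Type w) [L.Structure M]


variable (P D : Set M)

lemma sum_elim_comp_inlr {γ δ ε : Type*} (v : γ ⊕ δ → ε) :
    Sum.elim (v ∘ Sum.inl) (v ∘ Sum.inr) = v :=
  funext fun x => by cases x <;> rfl

lemma coe_fun_inj {γ : Type*} {v v' : γ → ↥P}
    (h : (fun i => ((v i : M))) = fun i => ((v' i : M))) : v = v' :=
  funext fun i => Subtype.ext (congrFun h i)

lemma pairDef_mem_P : PairDef L M P ∅ {x : Fin 1 → M | x 0 ∈ P} := by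
  letI := pairStructure L M P
  show (∅ : Set M).Definable (Lpair L) {x : Fin 1 → M | x 0 ∈ P}
  refine ⟨Relations.formula (Sum.inl (Sum.inr (show unaryLang.Relations 1 from ())) :
    ((Lpair L)[[(∅ : Set M)]]).Relations 1) (fun _ => Term.var 0), ?_⟩
  ext x
  rw [Set.mem_setOf_eq, Set.mem_setOf_eq]
  exact Iff.rfl

lemma pairDef_cube {γ : Type*} [Finite γ] :
    PairDef L M P ∅ {w : γ → M | ∀ i, w i ∈ P} := by
  letI := pairStructure L M P
  show (∅ : Set M).Definable (Lpair L) {w : γ → M | ∀ i, w i ∈ P}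
  cases nonempty_fintype γ
  have h : ∀ i : γ, (∅ : Set M).Definable (Lpair L) {w : γ → M | w i ∈ P} := fun i =>
    (show (∅ : Set M).Definable (Lpair L) {x : Fin 1 → M | x 0 ∈ P} from
      pairDef_mem_P L M P).preimage_comp (fun _ : Fin 1 => i)
  have h2 := definable_biInter_finset h Finset.univ
  have heq : {w : γ → M | ∀ i, w i ∈ P} = ⋂ i ∈ Finset.univ, {w : γ → M | w i ∈ P} := by
    ext w; simp
  rw [heq]
  exact h2

lemma pairDef_of_L {A : Set M} {γ : Type*} {S : Set (γ → M)}
    (hS : A.Definable L S) : PairDef L M P A S := by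
  letI inst : (Lpair L).Structure M := pairStructure L M P
  letI : (L.sum unaryLang).Structure M := inst
  have hexp : (LHom.sumInl : L →ᴸ L.sum unaryLang).IsExpansionOn M :=
    ⟨fun _ _ => rfl, fun _ _ => rfl⟩
  exact @Set.Definable.map_expansion _ _ _ _ _ _ _ _ hS LHom.sumInl hexp

lemma ind_term_var {γ : Type*} (t : (indLang L M D).Term γ) : ∃ a, t = Term.var a := by
  cases t with
  | var a => exact ⟨a, rfl⟩
  | func f ts => exact Empty.elim f

def liftSet {β : Type*} {k : ℕ} (Θ : (indLang L M D).BoundedFormula β k) :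
    Set (β ⊕ Fin k → M) :=
  {w : β ⊕ Fin k → M |
    ∃ v : β ⊕ Fin k → ↥P, w = (fun i => ((v i : M))) ∧
      @BoundedFormula.Realize _ ↥P (indStructure L M P D) _ _ Θ (v ∘ Sum.inl) (v ∘ Sum.inr)}

lemma indDef_pairDef {β : Type*} [Finite β] : ∀ {k : ℕ}
    (Θ : (indLang L M D).BoundedFormula β k),
    PairDef L M P D (liftSet L M P D Θ) := by
  letI := pairStructure L M P
  letI := indStructure L M P D
  intro k Θ
  induction Θ with
  | @falsum k =>
    have heq : liftSet L M P D (BoundedFormula.falsum :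
        (indLang L M D).BoundedFormula β k) = (∅ : Set (β ⊕ Fin k → M)) := by
      ext w
      simp only [liftSet, Set.mem_setOf_eq, Set.mem_empty_iff_false, iff_false, not_exists]
      rintro v ⟨_, hv⟩
      exact hv
    rw [heq]
    exact definable_empty
  | @equal k t₁ t₂ =>
    obtain ⟨a₁, rfl⟩ := ind_term_var L M D t₁
    obtain ⟨a₂, rfl⟩ := ind_term_var L M D t₂
    have heq : liftSet L M P D (BoundedFormula.equal (Term.var a₁) (Term.var a₂))
        = {w : β ⊕ Fin k → M | ∀ i, w i ∈ P} ∩ {w : β ⊕ Fin k → M | w a₁ = w a₂} := by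
      ext w
      simp only [liftSet, Set.mem_setOf_eq]
      constructor
      · rintro ⟨v, rfl, hv⟩
        refine ⟨fun i => (v i).2, ?_⟩
        have hv' : Sum.elim (v ∘ Sum.inl) (v ∘ Sum.inr) a₁
            = Sum.elim (v ∘ Sum.inl) (v ∘ Sum.inr) a₂ := hv
        rw [sum_elim_comp_inlr] at hv'
        show ((v a₁ : M)) = ((v a₂ : M))
        rw [hv']
      · rintro ⟨hw, he⟩
        refine ⟨fun i => ⟨w i, hw i⟩, rfl, ?_⟩
        show Sum.elim ((fun i => (⟨w i, hw i⟩ : ↥P)) ∘ Sum.inl)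
            ((fun i => (⟨w i, hw i⟩ : ↥P)) ∘ Sum.inr) a₁ = Sum.elim _ _ a₂
        rw [sum_elim_comp_inlr]
        exact Subtype.ext he
    rw [heq]
    exact ((pairDef_cube L M P).mono (Set.empty_subset D)).inter (definable_eq_var a₁ a₂)
  | @rel k j R ts =>
    have hvar := fun i => ind_term_var L M D (ts i)
    choose a ha using hvar
    let ψ : (L[[D]]).Formula (Fin j) := R
    have hRdef : D.Definable L (setOf (Formula.Realize (M := M) ψ)) :=
      definable_iff_empty_definable_with_params.mpr (empty_definable_iff.mpr ⟨ψ, rfl⟩)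
    have hpair := pairDef_of_L L M P (A := D) hRdef
    have heq : liftSet L M P D (BoundedFormula.rel R ts)
        = {w : β ⊕ Fin k → M | ∀ i, w i ∈ P} ∩
          ((fun g : β ⊕ Fin k → M => g ∘ (fun i => a i)) ⁻¹'
            setOf (Formula.Realize (M := M) ψ)) := by
      ext w
      simp only [liftSet, Set.mem_setOf_eq]
      have hrw : ∀ v : β ⊕ Fin k → ↥P,
          BoundedFormula.Realize (BoundedFormula.rel R ts) (v ∘ Sum.inl) (v ∘ Sum.inr)
          ↔ Formula.Realize (M := M) ψ (fun i => ((v (a i) : M))) := by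
        intro v
        have : BoundedFormula.Realize (BoundedFormula.rel R ts) (v ∘ Sum.inl) (v ∘ Sum.inr)
            ↔ Structure.RelMap (M := ↥P) R
              (fun i => Term.realize (Sum.elim (v ∘ Sum.inl) (v ∘ Sum.inr)) (ts i)) :=
          Iff.rfl
        rw [this]
        have hterm : (fun i => Term.realize (Sum.elim (v ∘ Sum.inl) (v ∘ Sum.inr)) (ts i))
            = fun i => v (a i) := by
          funext i
          rw [ha i]
          rw [sum_elim_comp_inlr]
          rfl
        rw [hterm]
        exact Iff.rfl
      constructor
      · rintro ⟨v, rfl, hv⟩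
        exact ⟨fun i => (v i).2, (hrw v).mp hv⟩
      · rintro ⟨hw, hR⟩
        exact ⟨fun i => ⟨w i, hw i⟩, rfl, (hrw _).mpr hR⟩
    rw [heq]
    exact ((pairDef_cube L M P).mono (Set.empty_subset D)).inter (hpair.preimage_comp _)
  | @imp k θ₁ θ₂ ih₁ ih₂ =>
    have heq : liftSet L M P D (θ₁.imp θ₂)
        = {w : β ⊕ Fin k → M | ∀ i, w i ∈ P} ∩
          ((liftSet L M P D θ₁)ᶜ ∪ liftSet L M P D θ₂) := by
      ext w
      simp only [liftSet, Set.mem_setOf_eq]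
      constructor
      · rintro ⟨v, rfl, hv⟩
        refine ⟨fun i => (v i).2, ?_⟩
        by_cases h1 : BoundedFormula.Realize θ₁ (v ∘ Sum.inl) (v ∘ Sum.inr)
        · exact Or.inr ⟨v, rfl, hv h1⟩
        · refine Or.inl ?_
          rintro ⟨v', hv', hr⟩
          have hveq : v = v' := coe_fun_inj M P hv'
          rw [← hveq] at hr
          exact h1 hr
      · rintro ⟨hw, h2⟩
        refine ⟨fun i => ⟨w i, hw i⟩, rfl, fun h1 => ?_⟩
        rcases h2 with h2 | h2
        · exact absurd ⟨fun i => ⟨w i, hw i⟩, rfl, h1⟩ h2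
        · obtain ⟨v', hv', hr⟩ := h2
          have hveq : v' = fun i => (⟨w i, hw i⟩ : ↥P) :=
            funext fun i => Subtype.ext (congrFun hv' i).symm
          rw [hveq] at hr
          exact hr
    rw [heq]
    exact ((pairDef_cube L M P).mono (Set.empty_subset D)).inter (ih₁.compl.union ih₂)
  | @all k θ ih =>
    have heq : liftSet L M P D θ.all
        = {w : β ⊕ Fin k → M | ∀ i, w i ∈ P} ∩
          ((fun g : β ⊕ Fin (k+1) → M => g ∘ (Sum.map id Fin.castSucc)) ''
            ({w : β ⊕ Fin (k+1) → M | ∀ i, w i ∈ P} ∩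
              ((liftSet L M P D θ)ᶜ)))ᶜ := by
      ext w
      simp only [liftSet, Set.mem_setOf_eq]
      constructor
      · rintro ⟨v, rfl, hv⟩
        rw [BoundedFormula.realize_all] at hv
        refine ⟨fun i => (v i).2, ?_⟩
        rintro ⟨u, ⟨hu, hbad⟩, huw⟩
        apply hbad
        refine ⟨fun i => ⟨u i, hu i⟩, rfl, ?_⟩
        have hvu : ∀ x : β ⊕ Fin k, u (Sum.map id Fin.castSucc x) = ((v x : M)) :=
          fun x => congrFun huw x
        have h1 : (fun i => (⟨u i, hu i⟩ : ↥P)) ∘ Sum.inl = v ∘ Sum.inl := by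
          funext b; exact Subtype.ext (hvu (Sum.inl b))
        have h2 : (fun i => (⟨u i, hu i⟩ : ↥P)) ∘ Sum.inr
            = Fin.snoc (v ∘ Sum.inr) ⟨u (Sum.inr (Fin.last k)), hu _⟩ := by
          funext i
          refine Fin.lastCases ?_ ?_ i
          · simp only [Function.comp_apply, Fin.snoc_last]
          · intro j
            simp only [Function.comp_apply, Fin.snoc_castSucc]
            exact Subtype.ext (hvu (Sum.inr j))
        rw [h1, h2]
        exact hv _
      · rintro ⟨hw, hnb⟩
        refine ⟨fun i => ⟨w i, hw i⟩, rfl, ?_⟩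
        rw [BoundedFormula.realize_all]
        intro y
        by_contra hny
        apply hnb
        let vv : β ⊕ Fin (k+1) → ↥P := Sum.elim ((fun i => (⟨w i, hw i⟩ : ↥P)) ∘ Sum.inl)
          (Fin.snoc ((fun i => (⟨w i, hw i⟩ : ↥P)) ∘ Sum.inr) y)
        refine ⟨fun i => ((vv i : M)), ⟨fun i => (vv i).2, ?_⟩, ?_⟩
        · rintro ⟨v', hv', hr⟩
          apply hny
          have hveq : vv = v' := coe_fun_inj M P hv'
          rw [← hveq] at hr
          have h1 : vv ∘ Sum.inl = (fun i => (⟨w i, hw i⟩ : ↥P)) ∘ Sum.inl := rfl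
          have h2 : vv ∘ Sum.inr = Fin.snoc ((fun i => (⟨w i, hw i⟩ : ↥P)) ∘ Sum.inr) y := by
            funext j; rfl
          rw [h1, h2] at hr
          exact hr
        · funext x
          rcases x with b | j
          · rfl
          · show Subtype.val (Sum.elim ((fun i => (⟨w i, hw i⟩ : ↥P)) ∘ Sum.inl)
              (Fin.snoc ((fun i => (⟨w i, hw i⟩ : ↥P)) ∘ Sum.inr) y)
              (Sum.inr (Fin.castSucc j))) = w (Sum.inr j)
            rw [Sum.elim_inr, Fin.snoc_castSucc]
            rfl
    rw [heq]
    exact ((pairDef_cube L M P).mono (Set.empty_subset D)).inter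
      ((((pairDef_cube L M P).mono (Set.empty_subset D)).inter ih.compl).image_comp _).compl

lemma indDef_pairDef' {β : Type*} [Finite β] (X : Set (β → ↥P))
    (hX : @Set.Definable ↥P (∅ : Set ↥P) (indLang L M D) (indStructure L M P D) β X) :
    PairDef L M P D {w : β → M | ∃ v : β → ↥P, w = (fun i => ((v i : M))) ∧ v ∈ X} := by
  letI := pairStructure L M P
  letI := indStructure L M P D
  obtain ⟨Θ, hΘ⟩ := empty_definable_iff.mp hX
  have h := indDef_pairDef L M P D (Θ : (indLang L M D).BoundedFormula β 0)
  have heq : {w : β → M | ∃ v : β → ↥P, w = (fun i => ((v i : M))) ∧ v ∈ X}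
      = (fun g : β ⊕ Fin 0 → M => g ∘ Sum.inl) ''
        liftSet L M P D (Θ : (indLang L M D).BoundedFormula β 0) := by
    simp only [liftSet]
    ext w
    constructor
    · rintro ⟨v, rfl, hv⟩
      have hvX : Formula.Realize Θ v := by rw [hΘ] at hv; exact hv
      refine ⟨fun i => ((Sum.elim v (fun j : Fin 0 => j.elim0) i : ↥P) : M), ⟨Sum.elim v
        (fun j : Fin 0 => j.elim0), rfl, ?_⟩, ?_⟩
      · have hfr : (Sum.elim v (fun j : Fin 0 => j.elim0)) ∘ Sum.inl = v := rfl
        rw [hfr]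
        have : ((Sum.elim v (fun j : Fin 0 => j.elim0)) ∘ Sum.inr) = (default : Fin 0 → ↥P) :=
          funext fun j => j.elim0
        rw [this]
        exact hvX
      · rfl
    · rintro ⟨u, ⟨v', rfl, hr⟩, rfl⟩
      refine ⟨v' ∘ Sum.inl, rfl, ?_⟩
      rw [hΘ]
      have hde : (v' ∘ Sum.inr) = (default : Fin 0 → ↥P) := funext fun j => j.elim0
      rw [hde] at hr
      exact hr
  rw [heq]
  exact h.image_comp _


def PhiR {n : ℕ} (φ : L.Formula (↥D ⊕ (Fin 1 ⊕ Fin n)))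
    (z : M) (x : Fin n → M) : Prop :=
  φ.Realize (Sum.elim (↑) (Sum.elim (fun _ : Fin 1 => z) x))

lemma PhiSet_def {n : ℕ} (φ : L.Formula (↥D ⊕ (Fin 1 ⊕ Fin n))) :
    D.Definable L {t : Fin 1 ⊕ Fin n → M | PhiR L M D φ (t (Sum.inl 0)) (t ∘ Sum.inr)} := by
  refine definable_iff_exists_formula_sum.mpr ⟨φ, ?_⟩
  ext t
  have hte : (Sum.elim (fun _ : Fin 1 => t (Sum.inl 0)) (t ∘ Sum.inr)) = t := by
    funext x
    rcases x with i | j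
    · have h0 : i = 0 := Subsingleton.elim i 0
      rw [h0]
      rfl
    · rfl
  simp only [Set.mem_setOf_eq, PhiR, hte]

lemma TE_def {n : ℕ} (φ : L.Formula (↥D ⊕ (Fin 1 ⊕ Fin n))) :
    D.Definable L {w : Fin n ⊕ Fin n → M |
      ∀ z, PhiR L M D φ z (w ∘ Sum.inl) ↔ PhiR L M D φ z (w ∘ Sum.inr)} := by
  have hbase := PhiSet_def L M D φ
  let g1 : (Fin 1 ⊕ Fin n) → ((Fin n ⊕ Fin n) ⊕ Fin 1) :=
    Sum.elim (fun _ => Sum.inr 0) (fun j => Sum.inl (Sum.inl j))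
  let g2 : (Fin 1 ⊕ Fin n) → ((Fin n ⊕ Fin n) ⊕ Fin 1) :=
    Sum.elim (fun _ => Sum.inr 0) (fun j => Sum.inl (Sum.inr j))
  let S1 : Set (((Fin n ⊕ Fin n) ⊕ Fin 1) → M) :=
    (fun u : ((Fin n ⊕ Fin n) ⊕ Fin 1) → M => u ∘ g1) ⁻¹'
      {t : Fin 1 ⊕ Fin n → M | PhiR L M D φ (t (Sum.inl 0)) (t ∘ Sum.inr)}
  let S2 : Set (((Fin n ⊕ Fin n) ⊕ Fin 1) → M) :=
    (fun u : ((Fin n ⊕ Fin n) ⊕ Fin 1) → M => u ∘ g2) ⁻¹'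
      {t : Fin 1 ⊕ Fin n → M | PhiR L M D φ (t (Sum.inl 0)) (t ∘ Sum.inr)}
  have hS1 : D.Definable L S1 := hbase.preimage_comp g1
  have hS2 : D.Definable L S2 := hbase.preimage_comp g2
  have hS1mem : ∀ u : ((Fin n ⊕ Fin n) ⊕ Fin 1) → M,
      u ∈ S1 ↔ PhiR L M D φ (u (Sum.inr 0)) (u ∘ Sum.inl ∘ Sum.inl) := fun u => Iff.rfl
  have hS2mem : ∀ u : ((Fin n ⊕ Fin n) ⊕ Fin 1) → M,
      u ∈ S2 ↔ PhiR L M D φ (u (Sum.inr 0)) (u ∘ Sum.inl ∘ Sum.inr) := fun u => Iff.rfl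
  have hBad : D.Definable L (((S1 ∩ S2) ∪ (S1ᶜ ∩ S2ᶜ))ᶜ) :=
    ((hS1.inter hS2).union (hS1.compl.inter hS2.compl)).compl
  have hIm := (hBad.image_comp (Sum.inl : (Fin n ⊕ Fin n) → (Fin n ⊕ Fin n) ⊕ Fin 1)).compl
  have heq : {w : Fin n ⊕ Fin n → M |
      ∀ z, PhiR L M D φ z (w ∘ Sum.inl) ↔ PhiR L M D φ z (w ∘ Sum.inr)}
      = ((fun u : ((Fin n ⊕ Fin n) ⊕ Fin 1) → M => u ∘ Sum.inl) ''
          (((S1 ∩ S2) ∪ (S1ᶜ ∩ S2ᶜ))ᶜ))ᶜ := by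
    ext w
    constructor
    · intro h
      rintro ⟨u, hu, hul⟩
      apply hu
      have hz := h (u (Sum.inr 0))
      rw [← hul] at hz
      by_cases h1 : u ∈ S1
      · exact Or.inl ⟨h1, (hS2mem u).mpr (hz.mp ((hS1mem u).mp h1))⟩
      · refine Or.inr ⟨h1, fun h2 => h1 ((hS1mem u).mpr (hz.mpr ((hS2mem u).mp h2)))⟩
    · intro h z
      by_contra hziff
      apply h
      refine ⟨Sum.elim w (fun _ => z), ?_, rfl⟩
      intro hmem
      apply hziff
      rcases hmem with ⟨h1, h2⟩ | ⟨h1, h2⟩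
      · exact ⟨fun _ => (hS2mem _).mp h2, fun _ => (hS1mem _).mp h1⟩
      · constructor
        · intro hl
          exact absurd ((hS1mem _).mpr hl) h1
        · intro hr
          exact absurd ((hS2mem _).mpr hr) h2
  rw [heq]
  exact hIm

end Trans

/-- If `P_ind(D)` eliminates imaginaries, then for every `α ∈ dcl(P ∪ D)` there is a finite
tuple `q` from `P` with `dcl_{L(P)}(q ∪ D) = dcl_{L(P)}({α} ∪ D)`. -/
theorem statement18 {L : FirstOrder.Language.{u, v}} {M : Type w} [L.Structure M]
    [AddCommGroup M] [LinearOrder M] [IsOrderedAddMonoid M] [One M] (hM : OMinOrderedGroup L M)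
    {P D : Set M} (hEI : IndElimImaginaries L M P D) :
    ∀ α ∈ dcl L M (P ∪ D), ∃ (k : ℕ) (q : Fin k → M), (∀ i, q i ∈ P) ∧
      dclPair L M P (Set.range q ∪ D) = dclPair L M P ({α} ∪ D) := by
  classical
  letI instPair : (Lpair L).Structure M := pairStructure L M P
  letI instInd : (indLang L M D).Structure ↥P := indStructure L M P D
  intro α hα
  -- Step 1: extract a finite tuple of parameters from P and a formula over D
  have hα' : (P ∪ D).Definable L ({fun _ : Fin 1 => α} : Set (Fin 1 → M)) := hα
  obtain ⟨A0, hA0sub, hA0def⟩ := definable_iff_finitely_definable.mp hα'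
  set F : Finset M := A0.filter (fun a => a ∈ P) with hF
  set n : ℕ := F.card with hn
  set p : Fin n → M := fun i => ((F.equivFin.symm i : ↥F) : M) with hpdef
  have hp : ∀ i, p i ∈ P := fun i => (Finset.mem_filter.mp (F.equivFin.symm i).2).2
  have hA0' : (A0 : Set M) ⊆ Set.range p ∪ D := by
    intro a ha
    by_cases haP : a ∈ P
    · left
      refine ⟨F.equivFin ⟨a, Finset.mem_filter.mpr ⟨ha, haP⟩⟩, ?_⟩
      show ((F.equivFin.symm (F.equivFin ⟨a, _⟩) : ↥F) : M) = a
      rw [Equiv.symm_apply_apply]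
    · rcases hA0sub ha with h | h
      · exact absurd h haP
      · exact Or.inr h
  obtain ⟨φ₀, hφ₀⟩ := definable_iff_exists_formula_sum.mp (hA0def.mono hA0')
  have hmemD : ∀ a : ↥(Set.range p ∪ D), (a : M) ∉ D → ∃ i, p i = (a : M) := by
    intro a h
    rcases a.2 with h' | h'
    · exact h'
    · exact absurd h' h
  let ρ : (↥(Set.range p ∪ D) ⊕ Fin 1) → (↥D ⊕ (Fin 1 ⊕ Fin n)) := fun x =>
    match x with
    | Sum.inl a => if h : (a : M) ∈ D then Sum.inl ⟨(a : M), h⟩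
        else Sum.inr (Sum.inr (Classical.choose (hmemD a h)))
    | Sum.inr _ => Sum.inr (Sum.inl 0)
  let φ : L.Formula (↥D ⊕ (Fin 1 ⊕ Fin n)) := φ₀.relabel ρ
  have Hφ : ∀ z : M, PhiR L M D φ z p ↔ z = α := by
    intro z
    have hρ : (Sum.elim ((↑) : ↥D → M) (Sum.elim (fun _ : Fin 1 => z) p)) ∘ ρ
        = Sum.elim ((↑) : ↥(Set.range p ∪ D) → M) (fun _ : Fin 1 => z) := by
      funext x
      rcases x with a | i
      · show Sum.elim _ _ (ρ (Sum.inl a)) = (a : M)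
        by_cases h : (a : M) ∈ D
        · rw [show ρ (Sum.inl a) = Sum.inl ⟨(a : M), h⟩ from dif_pos h]
          rfl
        · rw [show ρ (Sum.inl a) = Sum.inr (Sum.inr (Classical.choose (hmemD a h)))
            from dif_neg h]
          exact Classical.choose_spec (hmemD a h)
      · rfl
    have h1 : PhiR L M D φ z p ↔
        φ₀.Realize (Sum.elim ((↑) : ↥(Set.range p ∪ D) → M) (fun _ : Fin 1 => z)) := by
      show (φ₀.relabel ρ).Realize _ ↔ _
      rw [Formula.realize_relabel, hρ]
    rw [h1]
    have h2 : (fun _ : Fin 1 => z) ∈ {v : Fin 1 → M |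
        φ₀.Realize (Sum.elim ((↑) : ↥(Set.range p ∪ D) → M) v)} ↔
        (fun _ : Fin 1 => z) ∈ ({fun _ : Fin 1 => α} : Set (Fin 1 → M)) := by
      rw [← hφ₀]
    rw [show (φ₀.Realize (Sum.elim ((↑) : ↥(Set.range p ∪ D) → M) (fun _ : Fin 1 => z)))
      = ((fun _ : Fin 1 => z) ∈ {v : Fin 1 → M |
        φ₀.Realize (Sum.elim ((↑) : ↥(Set.range p ∪ D) → M) v)}) from rfl]
    rw [h2]
    exact fun1_eq_iff
  -- Step 2: the equivalence relation E on P^n and its definability in the induced structure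
  let E : (Fin n → ↥P) → (Fin n → ↥P) → Prop := fun x y =>
    ∀ z : M, PhiR L M D φ z (fun i => ((x i : M))) ↔ PhiR L M D φ z (fun i => ((y i : M)))
  have hEquiv : Equivalence E :=
    ⟨fun _ _ => Iff.rfl, fun hxy z => (hxy z).symm, fun hxy hyz z => (hxy z).trans (hyz z)⟩
  obtain ⟨ψ, hψ⟩ := empty_definable_iff.mp
    (definable_iff_empty_definable_with_params.mp (TE_def L M D φ))
  have hEdef : (∅ : Set ↥P).Definable (indLang L M D)
      {pr : (Fin n ⊕ Fin n) → ↥P | E (fun i => pr (Sum.inl i)) (fun i => pr (Sum.inr i))} := by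
    refine empty_definable_iff.mpr
      ⟨Relations.formula (show (indLang L M D).Relations (n+n) from ψ.relabel finSumFinEquiv)
        (fun i => Term.var (finSumFinEquiv.symm i)), ?_⟩
    ext pr
    rw [Set.mem_setOf_eq, Set.mem_setOf_eq, Formula.realize_rel]
    have hrm : Structure.RelMap
        (show (indLang L M D).Relations (n+n) from ψ.relabel finSumFinEquiv)
        (fun i => Term.realize (M := ↥P) pr
          (Term.var (finSumFinEquiv.symm i) : (indLang L M D).Term (Fin n ⊕ Fin n)))
        ↔ (ψ.relabel finSumFinEquiv).Realize
          (fun i => ((pr (finSumFinEquiv.symm i) : M))) := Iff.rfl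
    rw [hrm, Formula.realize_relabel]
    have hcomp : ((fun i => ((pr (finSumFinEquiv.symm i) : M))) ∘ finSumFinEquiv)
        = fun i => ((pr i : M)) := by
      funext i
      show ((pr (finSumFinEquiv.symm (finSumFinEquiv i)) : M)) = _
      rw [Equiv.symm_apply_apply]
    rw [hcomp]
    have hmem : (fun i => ((pr i : M))) ∈ {w : Fin n ⊕ Fin n → M |
        ∀ z, PhiR L M D φ z (w ∘ Sum.inl) ↔ PhiR L M D φ z (w ∘ Sum.inr)}
        ↔ ψ.Realize (fun i => ((pr i : M))) := by rw [hψ]; exact Iff.rfl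
    rw [← hmem]
    exact Iff.rfl
  -- Step 3: apply elimination of imaginaries
  have hEI' : ElimImaginaries (indLang L M D) ↥P := hEI
  obtain ⟨l, g, hgdef, hgE⟩ := hEI' n E hEquiv hEdef
  let phat : Fin n → ↥P := fun i => ⟨p i, hp i⟩
  refine ⟨l, fun i => ((g phat i : M)), fun i => (g phat i).2, ?_⟩
  set q : Fin l → M := fun i => ((g phat i : M)) with hqdef
  -- Step 4: the graph of g transferred to the pair
  have hGhat : PairDef L M P D {w : Fin n ⊕ Fin l → M |
      ∃ v : Fin n ⊕ Fin l → ↥P, w = (fun i => ((v i : M))) ∧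
        (fun i => v (Sum.inr i)) = g (fun i => v (Sum.inl i))} :=
    indDef_pairDef' L M P D _ hgdef
  have hGh : (D).Definable (Lpair L) {w : Fin n ⊕ Fin l → M |
      ∃ v : Fin n ⊕ Fin l → ↥P, w = (fun i => ((v i : M))) ∧
        (fun i => v (Sum.inr i)) = g (fun i => v (Sum.inl i))} := hGhat
  have hPhiPair : (D).Definable (Lpair L)
      {t : Fin 1 ⊕ Fin n → M | PhiR L M D φ (t (Sum.inl 0)) (t ∘ Sum.inr)} :=
    pairDef_of_L L M P (PhiSet_def L M D φ)
  -- Claim I : α is definable over (range q ∪ D) in the pair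
  have hclaimI : (Set.range q ∪ D).Definable (Lpair L)
      ({fun _ : Fin 1 => α} : Set (Fin 1 → M)) := by
    have hQall : (Set.range q ∪ D).Definable (Lpair L)
        {w : Fin n ⊕ Fin l → M | ∀ j : Fin l, w (Sum.inr j) = q j} := by
      have h : ∀ j : Fin l, (Set.range q ∪ D).Definable (Lpair L)
          {w : Fin n ⊕ Fin l → M | w (Sum.inr j) = q j} :=
        fun j => definable_eq_const (c := q j) (Set.mem_union_left D (Set.mem_range_self j)) (Sum.inr j)
      have h2 := definable_biInter_finset h Finset.univ
      have heq0 : {w : Fin n ⊕ Fin l → M | ∀ j : Fin l, w (Sum.inr j) = q j}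
          = ⋂ j ∈ Finset.univ, {w : Fin n ⊕ Fin l → M | w (Sum.inr j) = q j} := by
        ext w; simp
      rw [heq0]; exact h2
    have hGx := ((hGh.mono (Set.subset_union_right : D ⊆ Set.range q ∪ D)).inter
      hQall).image_comp (Sum.inl : Fin n → Fin n ⊕ Fin l)
    have hB1 := hGx.preimage_comp (Sum.inr : Fin n → Fin 1 ⊕ Fin n)
    have hS := (hB1.inter (hPhiPair.mono
      (Set.subset_union_right : D ⊆ Set.range q ∪ D))).image_comp
      (Sum.inl : Fin 1 → Fin 1 ⊕ Fin n)
    have heq : ({fun _ : Fin 1 => α} : Set (Fin 1 → M))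
        = (fun u : (Fin 1 ⊕ Fin n) → M => u ∘ Sum.inl) ''
          (((fun u : (Fin 1 ⊕ Fin n) → M => u ∘ Sum.inr) ⁻¹'
              ((fun w : (Fin n ⊕ Fin l) → M => w ∘ Sum.inl) ''
                ({w : Fin n ⊕ Fin l → M |
                    ∃ v : Fin n ⊕ Fin l → ↥P, w = (fun i => ((v i : M))) ∧
                      (fun i => v (Sum.inr i)) = g (fun i => v (Sum.inl i))} ∩
                  {w : Fin n ⊕ Fin l → M | ∀ j : Fin l, w (Sum.inr j) = q j})))
            ∩ {t : Fin 1 ⊕ Fin n → M | PhiR L M D φ (t (Sum.inl 0)) (t ∘ Sum.inr)}) := by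
      ext v
      constructor
      · intro hv
        have hv' : v = fun _ : Fin 1 => α := hv
        subst hv'
        refine ⟨Sum.elim (fun _ : Fin 1 => α) p,
          ⟨⟨Sum.elim p q, ⟨⟨Sum.elim phat (g phat), ?_, ?_⟩, ?_⟩, ?_⟩, ?_⟩, ?_⟩
        · funext x; rcases x with i | j <;> rfl
        · rfl
        · intro j; rfl
        · funext i; rfl
        · exact (Hφ α).mpr rfl
        · funext i; rfl
      · rintro ⟨u, ⟨hpre, hPhi⟩, rfl⟩
        obtain ⟨w', ⟨⟨v', rfl, hgr⟩, hwq⟩, hw'⟩ := hpre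
        have hvr : (fun i => v' (Sum.inr i)) = g phat := by
          funext j
          exact Subtype.ext (hwq j)
        have hgg : g (fun i => v' (Sum.inl i)) = g phat := by rw [← hgr]; exact hvr
        have hEE := (hgE (fun i => v' (Sum.inl i)) phat).mpr hgg
        have hz := hEE (u (Sum.inl 0))
        have hul : (fun i => ((v' (Sum.inl i) : M))) = u ∘ Sum.inr := by
          funext i; exact congrFun hw' i
        rw [hul] at hz
        have hPA : PhiR L M D φ (u (Sum.inl 0)) (fun i => ((phat i : M))) := hz.mp hPhi
        have halpha : u (Sum.inl 0) = α := (Hφ _).mp hPA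
        show u ∘ Sum.inl = fun _ : Fin 1 => α
        funext i
        have h0 : i = 0 := Subsingleton.elim i 0
        rw [h0]
        exact halpha
    rw [heq]
    exact hS
  -- Claim II : each q i is definable over ({α} ∪ D) in the pair
  have hclaimII : ∀ i₀ : Fin l, ({α} ∪ D).Definable (Lpair L)
      ({fun _ : Fin 1 => q i₀} : Set (Fin 1 → M)) := by
    intro i₀
    have hW1 := (hPhiPair.mono (Set.subset_union_right : D ⊆ {α} ∪ D)).preimage_comp
      (Sum.elim (fun _ : Fin 1 => (Sum.inr 0 : Fin n ⊕ Fin 1)) (fun j : Fin n => Sum.inl j))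
    have hW2 : ({α} ∪ D).Definable (Lpair L) {s : Fin n ⊕ Fin 1 → M | s (Sum.inr 0) = α} :=
      definable_eq_const (c := α)
        (show α ∈ ({α} : Set M) ∪ D from Set.mem_union_left D rfl) (Sum.inr 0)
    have hW := ((hW1.inter hW2).union (hW1.compl.inter hW2.compl)).compl
    have hAl := (hW.image_comp (Sum.inl : Fin n → Fin n ⊕ Fin 1)).compl
    have hC2 := hAl.preimage_comp
      (fun j : Fin n => (Sum.inr (Sum.inl j) : Fin 1 ⊕ (Fin n ⊕ Fin l)))
    have hC1 := (hGh.mono (Set.subset_union_right : D ⊆ {α} ∪ D)).preimage_comp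
      (Sum.inr : Fin n ⊕ Fin l → Fin 1 ⊕ (Fin n ⊕ Fin l))
    have hC3 : ({α} ∪ D).Definable (Lpair L)
        {u : Fin 1 ⊕ (Fin n ⊕ Fin l) → M | u (Sum.inl 0) = u (Sum.inr (Sum.inr i₀))} :=
      definable_eq_var _ _
    have hT := ((hC1.inter hC2).inter hC3).image_comp
      (Sum.inl : Fin 1 → Fin 1 ⊕ (Fin n ⊕ Fin l))
    have hAlmem : ∀ x : Fin n → M,
        (x ∈ ((fun s : (Fin n ⊕ Fin 1) → M => s ∘ Sum.inl) ''
          ((((fun s : (Fin n ⊕ Fin 1) → M =>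
              s ∘ (Sum.elim (fun _ : Fin 1 => (Sum.inr 0 : Fin n ⊕ Fin 1))
                (fun j : Fin n => Sum.inl j))) ⁻¹'
              {t : Fin 1 ⊕ Fin n → M | PhiR L M D φ (t (Sum.inl 0)) (t ∘ Sum.inr)}) ∩
              {s : Fin n ⊕ Fin 1 → M | s (Sum.inr 0) = α}) ∪
            (((fun s : (Fin n ⊕ Fin 1) → M =>
              s ∘ (Sum.elim (fun _ : Fin 1 => (Sum.inr 0 : Fin n ⊕ Fin 1))
                (fun j : Fin n => Sum.inl j))) ⁻¹'
              {t : Fin 1 ⊕ Fin n → M | PhiR L M D φ (t (Sum.inl 0)) (t ∘ Sum.inr)})ᶜ ∩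
              {s : Fin n ⊕ Fin 1 → M | s (Sum.inr 0) = α}ᶜ))ᶜ)ᶜ)
        ↔ ∀ z, (PhiR L M D φ z x ↔ z = α) := by
      intro x
      constructor
      · intro hx z
        by_contra hziff
        apply hx
        refine ⟨Sum.elim x (fun _ : Fin 1 => z), ?_, ?_⟩
        · intro hmem
          apply hziff
          rcases hmem with ⟨h1, h2⟩ | ⟨h1, h2⟩
          · exact ⟨fun _ => h2, fun _ => h1⟩
          · constructor
            · intro hph
              exact absurd hph h1
            · intro hza
              exact absurd hza h2
        · funext j; rfl
      · intro h
        rintro ⟨s, hsW, hsl⟩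
        apply hsW
        have hz := h (s (Sum.inr 0))
        rw [← hsl] at hz
        by_cases h1 : PhiR L M D φ (s (Sum.inr 0)) (s ∘ Sum.inl)
        · exact Or.inl ⟨h1, hz.mp h1⟩
        · exact Or.inr ⟨h1, fun h2 => h1 (hz.mpr h2)⟩
    have heq : ({fun _ : Fin 1 => q i₀} : Set (Fin 1 → M))
        = (fun u : (Fin 1 ⊕ (Fin n ⊕ Fin l)) → M => u ∘ Sum.inl) ''
          ((((fun u : (Fin 1 ⊕ (Fin n ⊕ Fin l)) → M => u ∘ Sum.inr) ⁻¹'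
              {w : Fin n ⊕ Fin l → M |
                ∃ v : Fin n ⊕ Fin l → ↥P, w = (fun i => ((v i : M))) ∧
                  (fun i => v (Sum.inr i)) = g (fun i => v (Sum.inl i))}) ∩
            ((fun u : (Fin 1 ⊕ (Fin n ⊕ Fin l)) → M =>
                u ∘ (fun j : Fin n => (Sum.inr (Sum.inl j) : Fin 1 ⊕ (Fin n ⊕ Fin l)))) ⁻¹'
              ((fun s : (Fin n ⊕ Fin 1) → M => s ∘ Sum.inl) ''
                ((((fun s : (Fin n ⊕ Fin 1) → M =>
                    s ∘ (Sum.elim (fun _ : Fin 1 => (Sum.inr 0 : Fin n ⊕ Fin 1))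
                      (fun j : Fin n => Sum.inl j))) ⁻¹'
                    {t : Fin 1 ⊕ Fin n → M | PhiR L M D φ (t (Sum.inl 0)) (t ∘ Sum.inr)}) ∩
                    {s : Fin n ⊕ Fin 1 → M | s (Sum.inr 0) = α}) ∪
                  (((fun s : (Fin n ⊕ Fin 1) → M =>
                    s ∘ (Sum.elim (fun _ : Fin 1 => (Sum.inr 0 : Fin n ⊕ Fin 1))
                      (fun j : Fin n => Sum.inl j))) ⁻¹'
                    {t : Fin 1 ⊕ Fin n → M | PhiR L M D φ (t (Sum.inl 0)) (t ∘ Sum.inr)})ᶜ ∩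
                    {s : Fin n ⊕ Fin 1 → M | s (Sum.inr 0) = α}ᶜ))ᶜ)ᶜ)) ∩
            {u : Fin 1 ⊕ (Fin n ⊕ Fin l) → M | u (Sum.inl 0) = u (Sum.inr (Sum.inr i₀))}) := by
      ext v
      constructor
      · intro hv
        have hv' : v = fun _ : Fin 1 => q i₀ := hv
        subst hv'
        refine ⟨Sum.elim (fun _ : Fin 1 => q i₀) (Sum.elim p q), ⟨⟨?_, ?_⟩, ?_⟩, ?_⟩
        · exact ⟨Sum.elim phat (g phat), by funext x; rcases x with i | j <;> rfl, rfl⟩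
        · have hfun : ((Sum.elim (fun _ : Fin 1 => q i₀) (Sum.elim p q)) ∘
              (fun j : Fin n => (Sum.inr (Sum.inl j) : Fin 1 ⊕ (Fin n ⊕ Fin l)))) = p := by
            funext j; rfl
          simp only [Set.mem_preimage]
          rw [hfun]
          exact (hAlmem p).mpr (fun z => Hφ z)
        · rfl
        · funext i; rfl
      · rintro ⟨u, ⟨⟨hc1, hc2⟩, hc3⟩, rfl⟩
        obtain ⟨v', hv'eq, hgr⟩ := hc1
        have hx : (fun j => ((v' (Sum.inl j) : M)))
            = u ∘ (fun j : Fin n => (Sum.inr (Sum.inl j) : Fin 1 ⊕ (Fin n ⊕ Fin l))) := by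
          funext j
          exact (congrFun hv'eq (Sum.inl j)).symm
        have hAlv : ∀ z, (PhiR L M D φ z (fun j => ((v' (Sum.inl j) : M))) ↔ z = α) := by
          intro z
          rw [hx]
          exact (hAlmem _).mp hc2 z
        have hEE : E (fun j => v' (Sum.inl j)) phat :=
          fun z => (hAlv z).trans (Hφ z).symm
        have hgg := (hgE _ phat).mp hEE
        have h2 : v' (Sum.inr i₀) = g phat i₀ :=
          (congrFun hgr i₀).trans (congrFun hgg i₀)
        have hqval : u (Sum.inr (Sum.inr i₀)) = q i₀ := by
          have h1 : u (Sum.inr (Sum.inr i₀)) = ((v' (Sum.inr i₀) : M)) :=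
            congrFun hv'eq (Sum.inr i₀)
          rw [h1, h2, hqdef]
        show u ∘ Sum.inl = fun _ : Fin 1 => q i₀
        funext i
        have h0 : i = 0 := Subsingleton.elim i 0
        rw [h0]
        show u (Sum.inl 0) = q i₀
        rw [← hqval]
        exact hc3
    rw [heq]
    exact hT
  -- Step 5: conclude
  ext b
  show PairDef L M P (Set.range q ∪ D) _ ↔ PairDef L M P ({α} ∪ D) _
  constructor
  · intro hb
    have hb' : (Set.range q ∪ D).Definable (Lpair L)
        ({fun _ : Fin 1 => b} : Set (Fin 1 → M)) := hb
    show ({α} ∪ D).Definable (Lpair L) ({fun _ : Fin 1 => b} : Set (Fin 1 → M))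
    refine definable_subst_tuple q (fun i => hclaimII i) (hb'.mono ?_)
    exact Set.union_subset_union_right _ Set.subset_union_right
  · intro hb
    have hb' : ({α} ∪ D).Definable (Lpair L)
        ({fun _ : Fin 1 => b} : Set (Fin 1 → M)) := hb
    show (Set.range q ∪ D).Definable (Lpair L) ({fun _ : Fin 1 => b} : Set (Fin 1 → M))
    refine definable_subst hclaimI (hb'.mono ?_)
    exact Set.union_subset_union_right _ Set.subset_union_right

end EIPaper
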